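/- For every γ ∈ G(r,n), the generating function over colored sequences associated with γ satisfies Σ_{f ∈ N_0^{(r,n)}, π(f)=γ} t^{max(f)} q^{n·max(f) − |f|} = t^{des_G(γ)} q^{maj(γ)} / ((1−t)(1−tq)···(1−tq^{n−1})) as an identity of formal power series in t and q. -/

import Mathlib

/-!
Sorting `f` along `γ = π(f)` gives a weakly increasing sequence `μ_i = f_{σ(i)}` which must rise
strictly at every descent of `γ`: at position `0` because a zero value carries color `0`, at the
other positions because of the tie-breaking rule; conversely every such `μ` comes from a unique
`f`. Hence `μ_i = Σ_{j ≤ i} (b_j + [j ∈ Des_G γ])` for a unique, unconstrained gap vector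
`b ∈ ℕⁿ`, and then `max f = Σ b_j + des_G γ` and `n·max f − |f| = Σ j·b_j + maj γ`. The gap
vectors are counted by `∏_{j<n} 1/(1 − t q^j)`, as the recursion obtained by splitting off the
last gap shows.
-/

open Finset

namespace Paper

/-- An element of `G(r,n) = ℤ_r ≀ S_n`: a pair (underlying permutation, color vector). -/
abbrev CPerm (r n : ℕ) := Equiv.Perm (Fin n) × (Fin n → Fin r)

/-- A colored sequence: values and colors. -/
abbrev CSeq (r n : ℕ) := (Fin n → ℕ) × (Fin n → Fin r)

variable {r n : ℕ}

/-- The order on colored integers (value, color):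
`n^{r-1} < ⋯ < n^1 < ⋯ < 1^{r-1} < ⋯ < 1^1 < 0 < 1 < ⋯ < n`.
`clt a b` means `a < b`. -/
def clt (a b : ℕ × ℕ) : Prop :=
  (0 < a.2 ∧ b.2 = 0) ∨
  (0 < a.2 ∧ 0 < b.2 ∧ (b.1 < a.1 ∨ (a.1 = b.1 ∧ b.2 < a.2))) ∨
  (a.2 = 0 ∧ b.2 = 0 ∧ a.1 < b.1)

instance (a b : ℕ × ℕ) : Decidable (clt a b) := by unfold clt; exact inferInstance

/-- The colored entry of `γ` at (0-based) position `i`: value `σ(i)` (1-based) with its color. -/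
def entry (γ : CPerm r n) (i : Fin n) : ℕ × ℕ := ((γ.1 i : ℕ) + 1, (γ.2 i : ℕ))

/-- Window value `γ(i)` for `i ∈ [0,n]` (1-based positions), with `γ(0) := 0`. -/
def wval (γ : CPerm r n) (i : ℕ) : ℕ × ℕ :=
  if h : 1 ≤ i ∧ i ≤ n then ((γ.1 ⟨i - 1, by omega⟩ : ℕ) + 1, (γ.2 ⟨i - 1, by omega⟩ : ℕ))
  else (0, 0)

/-- Descent set `Des_G(γ) = {i ∈ [0,n-1] : γ(i) > γ(i+1)}`, with `γ(0) := 0`. -/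
def DesG (γ : CPerm r n) : Finset ℕ :=
  (range n).filter fun i => clt (wval γ (i + 1)) (wval γ i)

def desG (γ : CPerm r n) : ℕ := (DesG γ).card

def majG (γ : CPerm r n) : ℕ := ∑ i ∈ DesG γ, i

def colG (γ : CPerm r n) : ℕ := ∑ i, (γ.2 i : ℕ)

/-- Number of inversions: pairs `i < j` with `γ(i) > γ(j)` in the colored order. -/
def invG (γ : CPerm r n) : ℕ :=
  ((univ : Finset (Fin n × Fin n)).filter fun p =>
    p.1 < p.2 ∧ clt (entry γ p.2) (entry γ p.1)).card

/-- Length `ℓ_G(γ) = inv(γ) + Σ_{c_i ≠ 0} (σ(i) + c_i - 1)` (σ(i) 1-based). -/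
def lenG (γ : CPerm r n) : ℕ :=
  invG γ + ∑ i ∈ univ.filter (fun i => (γ.2 i : ℕ) ≠ 0), ((γ.1 i : ℕ) + (γ.2 i : ℕ))

/-- Membership in `N_0^{(r,n)}`: a zero value has color 0. -/
def ValidSeq (f : CSeq r n) : Prop := ∀ i, f.1 i = 0 → (f.2 i : ℕ) = 0

/-- The defining property of `π(f) = γ = (c;σ)`:
`f_{σ(1)} ≤ … ≤ f_{σ(n)}`, `c_i(γ) = c_{σ(i)}(f)`, and `γ(i) < γ(i+1)` whenever
`f_{σ(i)} = f_{σ(i+1)}`. -/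
def isPi (f : CSeq r n) (γ : CPerm r n) : Prop :=
  (∀ i j : Fin n, i ≤ j → f.1 (γ.1 i) ≤ f.1 (γ.1 j)) ∧
  (∀ i, γ.2 i = f.2 (γ.1 i)) ∧
  (∀ i j : Fin n, (i : ℕ) + 1 = (j : ℕ) → f.1 (γ.1 i) = f.1 (γ.1 j) →
    clt (entry γ i) (entry γ j))

def maxf (f : CSeq r n) : ℕ := univ.sup f.1

def sumf (f : CSeq r n) : ℕ := ∑ i, f.1 i

/-- The partition `λ(f)` (relative to `γ = π(f)`), with values in `ℤ`:
`λ_i = f_{σ(i)} - #{j ∈ Des_G(γ) : j ≤ i-1}` (1-based `i`). -/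
def lamZ (f : CSeq r n) (γ : CPerm r n) (i : Fin n) : ℤ :=
  (f.1 (γ.1 i) : ℤ) - ((DesG γ).filter (· ≤ (i : ℕ))).card

/-- 1-based reading of an `n`-tuple, with value `0` at index `0` (and outside `[1,n]`). -/
def mval (μ : Fin n → ℕ) (i : ℕ) : ℕ :=
  if h : 1 ≤ i ∧ i ≤ n then μ ⟨i - 1, by omega⟩ else 0

/-- `μ` is `γ`-compatible: `μ_i < μ_{i+1}` for all `i ∈ Des_G(γ)` (with `μ_0 := 0`). -/
def compat (μ : Fin n → ℕ) (γ : CPerm r n) : Prop :=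
  ∀ i ∈ DesG γ, mval μ i < mval μ (i + 1)

/-- The skew inverse `γ̃⁻¹ = (c_{σ⁻¹(1)},…,c_{σ⁻¹(n)}; σ⁻¹)`. -/
def skewInv (γ : CPerm r n) : CPerm r n := (γ.1⁻¹, fun i => γ.2 (γ.1⁻¹ i))

/-- The group inverse: `γ⁻¹ = (c'; σ⁻¹)` with `c'_i = (r - c_{σ⁻¹(i)}) mod r`. -/
def cinv (γ : CPerm r n) : CPerm r n :=
  (γ.1⁻¹, fun i =>
    ⟨(r - (γ.2 (γ.1⁻¹ i) : ℕ)) % r,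
      Nat.mod_lt _ (Nat.lt_of_le_of_lt (Nat.zero_le _) (γ.2 (γ.1⁻¹ i)).isLt)⟩)

/-- The group law of `G(r,n)`: `(c;σ)·(d;τ) = ((d_i + c_{τ(i)}) mod r; στ)`. -/
def cmul (x y : CPerm r n) : CPerm r n :=
  (x.1 * y.1, fun i =>
    ⟨((y.2 i : ℕ) + (x.2 (y.1 i) : ℕ)) % r,
      Nat.mod_lt _ (Nat.lt_of_le_of_lt (Nat.zero_le _) (y.2 i).isLt)⟩)

/-- The color-forgetting projection `φ : G(r,n) → B_n = G(2,n)`. -/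
def phi (γ : CPerm r n) : CPerm 2 n := (γ.1, fun i => ⟨min (γ.2 i : ℕ) 1, by omega⟩)

/-- `[m]_p = 1 + p + ⋯ + p^{m-1}`. -/
def qint {R : Type*} [CommRing R] (p : R) (m : ℕ) : R := ∑ j ∈ range m, p ^ j

/-- `[m]_p! = [1]_p [2]_p ⋯ [m]_p`. -/
def qfact {R : Type*} [CommRing R] (p : R) (m : ℕ) : R := ∏ j ∈ range m, qint p (j + 1)

/-- `[m̂]_{b,p}! = (1+bp)(1+bp²)⋯(1+bp^m)·[m]_p!`. -/
def hqfact {R : Type*} [CommRing R] (b p : R) (m : ℕ) : R :=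
  (∏ i ∈ range m, (1 + b * p ^ (i + 1))) * qfact p m

/-- A formal power series in two variables `X 0, X 1` from its coefficients. -/
def seriesOf2 (F : ℕ → ℕ → ℚ) : MvPowerSeries (Fin 2) ℚ := fun d => F (d 0) (d 1)

/-- A formal power series in three variables from its coefficients. -/
def seriesOf3 (F : ℕ → ℕ → ℕ → ℚ) : MvPowerSeries (Fin 3) ℚ := fun d => F (d 0) (d 1) (d 2)

lemma clt_asymm {a b : ℕ × ℕ} (h : clt a b) : ¬ clt b a := by
  unfold clt at *; omega

lemma clt_or_clt_of_fst_ne {a b : ℕ × ℕ} (h : a.1 ≠ b.1) : clt a b ∨ clt b a := by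
  unfold clt; omega

lemma snd_eq_zero_of_clt {a b : ℕ × ℕ} (h : clt a b) (ha : a.2 = 0) : b.2 = 0 := by
  unfold clt at h; omega

section Descents

variable (γ : CPerm r n)

lemma wval_add_one (i : Fin n) : wval γ (i + 1) = entry γ i := by
  simp [wval, entry, Nat.succ_le_of_lt i.isLt]

lemma DesG_subset_range : DesG γ ⊆ range n := filter_subset _ _

lemma zero_mem_DesG_iff (h0 : 0 < n) : 0 ∈ DesG γ ↔ (γ.2 ⟨0, h0⟩ : ℕ) ≠ 0 := by
  simp [DesG, h0, wval, clt, Nat.pos_iff_ne_zero]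

lemma mem_DesG_iff_clt {i j : Fin n} (hij : (i : ℕ) + 1 = j) :
    (j : ℕ) ∈ DesG γ ↔ clt (entry γ j) (entry γ i) := by
  rw [DesG, mem_filter, ← hij, wval_add_one γ i, ← wval_add_one γ j, hij]
  simp [j.isLt]

lemma notMem_DesG_iff_clt {i j : Fin n} (hij : (i : ℕ) + 1 = j) :
    (j : ℕ) ∉ DesG γ ↔ clt (entry γ i) (entry γ j) := by
  have hne : (entry γ i).1 ≠ (entry γ j).1 := by
    simp only [entry, ne_eq, add_left_inj, Fin.val_inj, γ.1.injective.eq_iff]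
    exact fun h => by omega
  rw [mem_DesG_iff_clt γ hij]
  exact ⟨(clt_or_clt_of_fst_ne hne).resolve_right, clt_asymm⟩

/-- In the colored order only color-`0` entries lie above a color-`0` entry, so color `0`
propagates from `γ(0) = 0` along the initial ascents. -/
lemma color_eq_zero_of_forall_notMem_DesG (i : Fin n) (h : ∀ k ≤ (i : ℕ), k ∉ DesG γ) :
    (γ.2 i : ℕ) = 0 := by
  obtain ⟨i, hi⟩ := i
  induction i with
  | zero => simpa [zero_mem_DesG_iff γ hi] using h 0 le_rfl
  | succ i ih =>
    have hprev : (γ.2 ⟨i, by omega⟩ : ℕ) = 0 :=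
      ih (by omega) fun k hk => h k (by simp at hk ⊢; omega)
    have hclt := (notMem_DesG_iff_clt γ (i := ⟨i, by omega⟩) (j := ⟨i + 1, hi⟩) rfl).1
      (h (i + 1) le_rfl)
    exact snd_eq_zero_of_clt hclt hprev

end Descents

lemma mval_zero (μ : Fin n → ℕ) : mval μ 0 = 0 := by simp [mval]

lemma mval_of_add_one_eq (μ : Fin n → ℕ) {i j : Fin n} (hij : (i : ℕ) + 1 = j) :
    mval μ j = μ i := by
  simp [mval, ← hij, j.isLt.le.trans' (by omega : (i : ℕ) + 1 ≤ j)]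

lemma sum_sum_Iic_add_sum_mul (a : Fin n → ℕ) :
    ∑ i : Fin n, ∑ j ∈ Iic i, a j + ∑ j : Fin n, (j : ℕ) * a j = n * ∑ j, a j := by
  rw [sum_comm' (t' := univ) (s' := fun j : Fin n => Ici j) (by simp), mul_sum,
    ← sum_add_distrib]
  refine sum_congr rfl fun j _ => ?_
  rw [sum_const, Fin.card_Ici, smul_eq_mul, ← add_mul, Nat.sub_add_cancel j.isLt.le]

lemma sum_fin_ite_mem {M : Type*} [AddCommMonoid M] {D : Finset ℕ} (hD : D ⊆ range n)
    (g : ℕ → M) :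
    ∑ j : Fin n, (if (j : ℕ) ∈ D then g j else 0) = ∑ d ∈ D, g d := by
  rw [Fin.sum_univ_eq_sum_range (fun j => if j ∈ D then g j else 0), sum_ite_mem,
    inter_eq_right.2 hD]

def ofGaps (D : Finset ℕ) (b : Fin n → ℕ) (i : Fin n) : ℕ :=
  ∑ j ∈ Iic i, (b j + if (j : ℕ) ∈ D then 1 else 0)

def gapsOf (D : Finset ℕ) (μ : Fin n → ℕ) (i : Fin n) : ℕ :=
  μ i - mval μ i - if (i : ℕ) ∈ D then 1 else 0

/-- `mval μ i` is the previous entry `μ_{i-1}`, with `μ_{-1} = 0`. -/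
def Admissible (D : Finset ℕ) (μ : Fin n → ℕ) : Prop :=
  ∀ i : Fin n, mval μ i + (if (i : ℕ) ∈ D then 1 else 0) ≤ μ i

section Gaps

variable {D : Finset ℕ}

lemma ofGaps_eq_mval_add (b : Fin n → ℕ) (i : Fin n) :
    ofGaps D b i = mval (ofGaps D b) i + (b i + if (i : ℕ) ∈ D then 1 else 0) := by
  obtain ⟨_ | i, hi⟩ := i
  · have hIic : Iic (⟨0, hi⟩ : Fin n) = {⟨0, hi⟩} := by
      ext j; simp [Fin.le_def, Fin.ext_iff]
    simp [ofGaps, mval_zero, hIic]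
  · have hIic :
        Iic (⟨i + 1, hi⟩ : Fin n) = insert ⟨i + 1, hi⟩ (Iic ⟨i, by omega⟩) := by
      ext j; simp [Fin.le_def, Fin.ext_iff]; omega
    rw [mval_of_add_one_eq _ (i := ⟨i, by omega⟩) rfl, ofGaps, hIic,
      sum_insert (by simp [Fin.le_def]), add_comm, ofGaps]

lemma admissible_ofGaps (b : Fin n → ℕ) : Admissible D (ofGaps D b) := fun i => by
  rw [ofGaps_eq_mval_add b i]; omega

lemma ofGaps_injective : Function.Injective (ofGaps (n := n) D) := fun b b' h => by
  funext i
  have hb := ofGaps_eq_mval_add (D := D) b i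
  have hb' := ofGaps_eq_mval_add (D := D) b' i
  rw [h] at hb
  omega

lemma ofGaps_mono (b : Fin n → ℕ) : Monotone (ofGaps D b) := fun _ _ hij =>
  sum_le_sum_of_subset (Iic_subset_Iic.2 hij)

lemma ofGaps_gapsOf {μ : Fin n → ℕ} (hμ : Admissible D μ) : ofGaps D (gapsOf D μ) = μ := by
  funext ⟨i, hi⟩
  have hstep := hμ ⟨i, hi⟩
  rw [ofGaps_eq_mval_add, gapsOf]
  induction i with
  | zero => simp only [mval_zero] at hstep ⊢; omega
  | succ i ih =>
    have hprev : mval (ofGaps D (gapsOf D μ)) (⟨i + 1, hi⟩ : Fin n) =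
        mval μ (⟨i + 1, hi⟩ : Fin n) := by
      rw [mval_of_add_one_eq _ (i := ⟨i, by omega⟩) rfl,
        mval_of_add_one_eq _ (i := ⟨i, by omega⟩) rfl, ofGaps_eq_mval_add, gapsOf,
        ih (by omega) (hμ _)]
    simp only [hprev] at hstep ⊢
    omega

lemma Admissible.monotone {μ : Fin n → ℕ} (hμ : Admissible D μ) : Monotone μ :=
  ofGaps_gapsOf hμ ▸ ofGaps_mono _

lemma Admissible.notMem_of_eq_zero {μ : Fin n → ℕ} (hμ : Admissible D μ) {i : Fin n}
    (hi : μ i = 0) {k : ℕ} (hk : k ≤ i) : k ∉ D := by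
  rw [← ofGaps_gapsOf hμ, ofGaps, sum_eq_zero_iff] at hi
  have hk0 := hi ⟨k, by omega⟩ (by simp [Fin.le_def, hk])
  intro hkD
  simp [hkD] at hk0

end Gaps

section Sequences

variable (γ : CPerm r n)

def seqOfGaps (b : Fin n → ℕ) : CSeq r n :=
  (fun x => ofGaps (DesG γ) b (γ.1⁻¹ x), fun x => γ.2 (γ.1⁻¹ x))

lemma validSeq_and_isPi_iff (f : CSeq r n) :
    ValidSeq f ∧ isPi f γ ↔
      (∀ i, f.2 (γ.1 i) = γ.2 i) ∧ Admissible (DesG γ) fun i => f.1 (γ.1 i) := by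
  constructor
  · rintro ⟨hvalid, hmono, hcolor, hequal⟩
    refine ⟨fun i => (hcolor i).symm, fun ⟨i, hi⟩ => ?_⟩
    cases i with
    | zero =>
      rw [mval_zero, zero_add]
      split_ifs with h0
      · rw [zero_mem_DesG_iff γ hi, hcolor] at h0
        exact Nat.one_le_iff_ne_zero.2 (mt (hvalid _) h0)
      · exact Nat.zero_le _
    | succ i =>
      rw [mval_of_add_one_eq _ (i := ⟨i, by omega⟩) rfl]
      have hle := hmono ⟨i, by omega⟩ ⟨i + 1, hi⟩ (by simp [Fin.le_def])
      split_ifs with hdes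
      · exact lt_of_le_of_ne hle fun heq =>
          (notMem_DesG_iff_clt γ rfl).2 (hequal _ _ rfl heq) hdes
      · simpa using hle
  · rintro ⟨hcolor, hadm⟩
    refine ⟨fun x hx => ?_, fun i j hij => hadm.monotone hij, fun i => (hcolor i).symm,
      fun i j hij heq => (notMem_DesG_iff_clt γ hij).1 fun hdes => ?_⟩
    · obtain ⟨i, rfl⟩ := γ.1.surjective x
      rw [hcolor]
      exact color_eq_zero_of_forall_notMem_DesG γ i fun k hk => hadm.notMem_of_eq_zero hx hk
    · have hstep := hadm j
      rw [mval_of_add_one_eq _ hij, if_pos hdes] at hstep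
      simp only [heq] at hstep
      omega

lemma validSeq_and_isPi_iff_exists_seqOfGaps (f : CSeq r n) :
    ValidSeq f ∧ isPi f γ ↔ ∃ b, seqOfGaps γ b = f := by
  rw [validSeq_and_isPi_iff]
  constructor
  · rintro ⟨hcolor, hadm⟩
    refine ⟨gapsOf (DesG γ) fun i => f.1 (γ.1 i),
      Prod.ext (funext fun x => ?_) (funext fun x => ?_)⟩
    · simp [seqOfGaps, ofGaps_gapsOf hadm]
    · simp [seqOfGaps, ← hcolor]
  · rintro ⟨b, rfl⟩
    exact ⟨fun i => by simp [seqOfGaps], by simpa [seqOfGaps] using admissible_ofGaps b⟩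

lemma seqOfGaps_injective : Function.Injective (seqOfGaps γ) := fun b b' h =>
  ofGaps_injective <| funext fun i => by
    simpa [seqOfGaps] using congr_fun (congr_arg Prod.fst h) (γ.1 i)

lemma sum_add_ite_mem_DesG (b : Fin n → ℕ) :
    ∑ j : Fin n, (b j + if (j : ℕ) ∈ DesG γ then 1 else 0) = ∑ j, b j + desG γ := by
  rw [sum_add_distrib, sum_fin_ite_mem (DesG_subset_range γ) fun _ => 1, desG, card_eq_sum_ones]

lemma sum_mul_add_ite_mem_DesG (b : Fin n → ℕ) :
    ∑ j : Fin n, (j : ℕ) * (b j + if (j : ℕ) ∈ DesG γ then 1 else 0) =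
      ∑ j : Fin n, (j : ℕ) * b j + majG γ := by
  simp only [mul_add, mul_ite, mul_one, mul_zero, sum_add_distrib]
  rw [sum_fin_ite_mem (DesG_subset_range γ) fun d => d, majG]

lemma maxf_seqOfGaps (b : Fin n → ℕ) : maxf (seqOfGaps γ b) = ∑ j, b j + desG γ := by
  rw [← sum_add_ite_mem_DesG]
  refine le_antisymm (Finset.sup_le fun x _ => sum_le_sum_of_subset (subset_univ _)) ?_
  obtain _ | n := n
  · simp
  · refine le_sup_of_le (mem_univ (γ.1 (Fin.last n))) (le_of_eq ?_)
    simp [seqOfGaps, ofGaps, ← Fin.top_eq_last]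

lemma sumf_seqOfGaps (b : Fin n → ℕ) :
    sumf (seqOfGaps γ b) + (∑ j : Fin n, (j : ℕ) * b j + majG γ) =
      n * (∑ j, b j + desG γ) := by
  rw [← sum_add_ite_mem_DesG, ← sum_mul_add_ite_mem_DesG, ← sum_sum_Iic_add_sum_mul, sumf,
    seqOfGaps, Equiv.sum_comp γ.1⁻¹ (ofGaps (DesG γ) b)]
  rfl

end Sequences

def gapTuples (n k m : ℕ) : Finset (Fin n → ℕ) :=
  (univ.piAntidiag k).filter fun b => ∑ i : Fin n, (i : ℕ) * b i = m

lemma mem_gapTuples {n k m : ℕ} {b : Fin n → ℕ} :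
    b ∈ gapTuples n k m ↔ ∑ i, b i = k ∧ ∑ i : Fin n, (i : ℕ) * b i = m := by
  simp [gapTuples]

lemma ncard_validSeq_isPi (γ : CPerm r n) (k m : ℕ) :
    {f : CSeq r n | ValidSeq f ∧ isPi f γ ∧ maxf f = k ∧ n * k - sumf f = m}.ncard =
      if desG γ ≤ k ∧ majG γ ≤ m then #(gapTuples n (k - desG γ) (m - majG γ)) else 0 := by
  have himage : {f : CSeq r n | ValidSeq f ∧ isPi f γ ∧ maxf f = k ∧ n * k - sumf f = m} =
      seqOfGaps γ '' {b | ∑ j, b j + desG γ = k ∧ ∑ j : Fin n, (j : ℕ) * b j + majG γ = m} := by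
    ext f
    simp only [Set.mem_ofPred_eq, Set.mem_image, ← and_assoc,
      validSeq_and_isPi_iff_exists_seqOfGaps]
    constructor
    · rintro ⟨⟨⟨b, rfl⟩, hk⟩, hm⟩
      have hsum := sumf_seqOfGaps γ b
      rw [maxf_seqOfGaps] at hk
      rw [hk] at hsum
      exact ⟨b, ⟨hk, by omega⟩, rfl⟩
    · rintro ⟨b, ⟨hk, hm⟩, rfl⟩
      have hsum := sumf_seqOfGaps γ b
      rw [hk] at hsum
      exact ⟨⟨⟨b, rfl⟩, by rw [maxf_seqOfGaps, hk]⟩, by omega⟩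
  rw [himage, Set.ncard_image_of_injective _ (seqOfGaps_injective γ)]
  split_ifs with h
  · rw [← Set.ncard_coe_finset]
    congr 1
    ext b
    rw [Set.mem_ofPred_eq, mem_coe, mem_gapTuples]
    omega
  · convert Set.ncard_empty (Fin n → ℕ)
    ext b
    simp only [Set.mem_ofPred_eq, Set.mem_empty_iff_false, iff_false]
    omega

lemma add_single_last_mem_gapTuples {c : Fin (n + 1) → ℕ} {k m : ℕ} :
    c + Pi.single (Fin.last n) 1 ∈ gapTuples (n + 1) k m ↔
      1 ≤ k ∧ n ≤ m ∧ c ∈ gapTuples (n + 1) (k - 1) (m - n) := by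
  simp only [mem_gapTuples, Pi.add_apply, mul_add, sum_add_distrib, Pi.single_apply, mul_ite,
    mul_one, mul_zero, sum_ite_eq', mem_univ, if_true, Fin.val_last]
  omega

lemma sub_single_last_add_single_last {b : Fin (n + 1) → ℕ} (hb : b (Fin.last n) ≠ 0) :
    b - Pi.single (Fin.last n) 1 + Pi.single (Fin.last n) 1 = b := by
  ext i
  by_cases hi : i = Fin.last n
  · subst hi; simp; omega
  · simp [hi]

lemma snoc_zero_mem_gapTuples {c : Fin n → ℕ} {k m : ℕ} :
    Fin.snoc c 0 ∈ gapTuples (n + 1) k m ↔ c ∈ gapTuples n k m := by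
  simp [mem_gapTuples, Fin.sum_univ_castSucc]

/-- Split by the last gap: it is `0`, or removing one unit from it costs `t q^n`. -/
lemma card_gapTuples_succ (n k m : ℕ) :
    #(gapTuples (n + 1) k m) = #(gapTuples n k m) +
      if 1 ≤ k ∧ n ≤ m then #(gapTuples (n + 1) (k - 1) (m - n)) else 0 := by
  rw [← card_filter_add_card_filter_not (fun b => b (Fin.last n) = 0)]
  congr 1
  · refine card_nbij' Fin.init (Fin.snoc · 0) (fun b hb => ?_) (fun c hc => ?_)
      (fun b hb => ?_) (fun c _ => Fin.init_snoc _ _)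
    · obtain ⟨hmem, hlast⟩ := mem_filter.1 hb
      rwa [mem_coe, ← snoc_zero_mem_gapTuples, ← hlast, Fin.snoc_init_self]
    · exact mem_filter.2 ⟨snoc_zero_mem_gapTuples.2 hc, Fin.snoc_last _ _⟩
    · simp only [← (mem_filter.1 hb).2, Fin.snoc_init_self]
  · split_ifs with h
    · refine card_nbij' (· - Pi.single (Fin.last n) 1) (· + Pi.single (Fin.last n) 1)
        (fun b hb => ?_) (fun c hc => ?_) (fun b hb => ?_) (fun c _ => add_tsub_cancel_right _ _)
      · obtain ⟨hmem, hlast⟩ := mem_filter.1 hb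
        rw [← sub_single_last_add_single_last hlast, add_single_last_mem_gapTuples] at hmem
        exact hmem.2.2
      · exact mem_filter.2 ⟨add_single_last_mem_gapTuples.2 ⟨h.1, h.2, hc⟩, by simp⟩
      · exact sub_single_last_add_single_last (mem_filter.1 hb).2
    · refine card_eq_zero.2 (filter_eq_empty_iff.2 fun b hmem hlast => h ?_)
      rw [← sub_single_last_add_single_last hlast, add_single_last_mem_gapTuples] at hmem
      exact ⟨hmem.1, hmem.2.1⟩


section Series

open MvPowerSeries

lemma coeff_seriesOf2 (F : ℕ → ℕ → ℚ) (d : Fin 2 →₀ ℕ) :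
    coeff d (seriesOf2 F) = F (d 0) (d 1) := rfl

lemma X_pow_mul_X_pow_mul_seriesOf2 (a b : ℕ) (F : ℕ → ℕ → ℚ) :
    X 0 ^ a * X 1 ^ b * seriesOf2 F =
      seriesOf2 fun k m => if a ≤ k ∧ b ≤ m then F (k - a) (m - b) else 0 := by
  rw [X_pow_eq, X_pow_eq, monomial_mul_monomial, one_mul]
  ext d
  have hle : Finsupp.single 0 a + Finsupp.single 1 b ≤ d ↔ a ≤ d 0 ∧ b ≤ d 1 := by
    simp [Finsupp.le_def, Fin.forall_fin_two]
  simp only [coeff_monomial_mul, one_mul, coeff_seriesOf2, hle]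
  split_ifs <;> simp

def gapSeries (n : ℕ) : MvPowerSeries (Fin 2) ℚ := seriesOf2 fun k m => #(gapTuples n k m)

lemma gapSeries_zero : gapSeries 0 = 1 := by
  ext d
  have hcard : ∀ k m, #(gapTuples 0 k m) = if k = 0 ∧ m = 0 then 1 else 0 := by
    intro k m
    split_ifs with h
    · exact card_eq_one.2 ⟨Fin.elim0, by
        ext b; simp [mem_gapTuples, h, Subsingleton.elim b Fin.elim0]⟩
    · exact card_eq_zero.2 <| eq_empty_of_forall_notMem fun b hb =>
        h (by simpa [mem_gapTuples, eq_comm] using hb)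
  have hd : d = 0 ↔ d 0 = 0 ∧ d 1 = 0 := by
    simp [Finsupp.ext_iff, Fin.forall_fin_two]
  simp only [gapSeries, coeff_seriesOf2, coeff_one, hcard, hd]
  split_ifs <;> simp

lemma gapSeries_succ (n : ℕ) :
    gapSeries (n + 1) = gapSeries n + X 0 * X 1 ^ n * gapSeries (n + 1) := by
  rw [← pow_one (X 0), gapSeries, gapSeries, X_pow_mul_X_pow_mul_seriesOf2]
  ext d
  rw [map_add, coeff_seriesOf2, coeff_seriesOf2, coeff_seriesOf2, card_gapTuples_succ]
  split_ifs <;> simp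

lemma gapSeries_mul_prod (n : ℕ) :
    gapSeries n * ∏ i ∈ range n, (1 - X 0 * X 1 ^ i) = 1 := by
  induction n with
  | zero => simp [gapSeries_zero]
  | succ n ih =>
    rw [prod_range_succ]
    linear_combination ih + (∏ i ∈ range n, (1 - X 0 * X 1 ^ i)) * gapSeries_succ n

lemma inv_prod_one_sub_X_mul_X_pow (n : ℕ) :
    (∏ i ∈ range n, (1 - X 0 * X 1 ^ i : MvPowerSeries (Fin 2) ℚ))⁻¹ = gapSeries n :=
  (MvPowerSeries.inv_eq_iff_mul_eq_one (by simp)).2 (gapSeries_mul_prod n)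

end Series

theorem stmt4_general (r n : ℕ) (γ : CPerm r n) :
    (seriesOf2 fun k m =>
        (({f : CSeq r n | ValidSeq f ∧ isPi f γ ∧ maxf f = k ∧ n * k - sumf f = m}).ncard : ℚ)) =
      (MvPowerSeries.X 0) ^ desG γ * (MvPowerSeries.X 1) ^ majG γ *
        (∏ i ∈ range n,
          (1 - (MvPowerSeries.X 0 : MvPowerSeries (Fin 2) ℚ) * (MvPowerSeries.X 1) ^ i))⁻¹ := by
  rw [inv_prod_one_sub_X_mul_X_pow, gapSeries, X_pow_mul_X_pow_mul_seriesOf2]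
  congr 1
  funext k m
  rw [ncard_validSeq_isPi]
  split_ifs <;> simp

/-- Proposition 3.10: for every `γ ∈ G(r,n)`,
`Σ_{f ∈ N_0^{(r,n)}, π(f)=γ} t^{max f} q^{n·max f − |f|} = t^{des_G γ} q^{maj γ} / (t;q)_n`,
as formal power series in `t = X 0` and `q = X 1`. -/
theorem stmt4 (r n : ℕ) (hr : 0 < r) (γ : CPerm r n) :
    (seriesOf2 fun k m =>
        (({f : CSeq r n | ValidSeq f ∧ isPi f γ ∧ maxf f = k ∧ n * k - sumf f = m}).ncard : ℚ)) =
      (MvPowerSeries.X 0) ^ desG γ * (MvPowerSeries.X 1) ^ majG γ *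
        (∏ i ∈ range n,
          (1 - (MvPowerSeries.X 0 : MvPowerSeries (Fin 2) ℚ) * (MvPowerSeries.X 1) ^ i))⁻¹ :=
  stmt4_general r n γ

end Paper
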